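/- There exists a constant c > 0 such that every finite simple graph G on n ≥ 1 vertices has at most c · n · 1.6181^{mw(G)} minimal separators, where mw(G) denotes the modular width of G. -/

import Mathlib

open SimpleGraph

universe u

/-- Reachability in `G − S`: there is a walk whose support avoids `S`. -/
def AvoidReach {V : Type u} (G : SimpleGraph V) (S : Set V) (u v : V) : Prop :=
  ∃ w : G.Walk u v, ∀ x ∈ w.support, x ∉ S

/-- `S` is a `u,v`-separator of `G`: `u, v ∉ S` and `u,v` lie in different
connected components of `G − S`. -/
def IsSep {V : Type u} (G : SimpleGraph V) (S : Set V) (u v : V) : Prop :=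
  u ∉ S ∧ v ∉ S ∧ ¬ AvoidReach G S u v

/-- `S` is a minimal `u,v`-separator of `G`. -/
def IsMinSep {V : Type u} (G : SimpleGraph V) (S : Set V) (u v : V) : Prop :=
  IsSep G S u v ∧ ∀ T ⊂ S, ¬ IsSep G T u v

/-- `S` is a minimal separator of `G`. -/
def IsMinimalSeparator {V : Type u} (G : SimpleGraph V) (S : Set V) : Prop :=
  ∃ u v, IsMinSep G S u v

/-- `C` is a connected component of `G − S`. -/
def IsCompOf {V : Type u} (G : SimpleGraph V) (S C : Set V) : Prop :=
  ∃ v, v ∉ S ∧ C = {x | AvoidReach G S v x}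

/-- The neighbourhood of a vertex set `A`: vertices outside `A` with a neighbour in `A`. -/
def setNbhd {V : Type u} (G : SimpleGraph V) (A : Set V) : Set V :=
  {x | x ∉ A ∧ ∃ a ∈ A, G.Adj x a}

/-- `C` is a full component of `G − S` associated to `S`, i.e. `N(C) = S`. -/
def IsFullCompOf {V : Type u} (G : SimpleGraph V) (S C : Set V) : Prop :=
  IsCompOf G S C ∧ setNbhd G C = S

/-- `W` is a vertex cover of `G`. -/
def IsVC {V : Type u} (G : SimpleGraph V) (W : Set V) : Prop :=
  ∀ ⦃a b⦄, G.Adj a b → a ∈ W ∨ b ∈ W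

/-- The vertex cover number `vc(G)`. -/
noncomputable def vcNum {V : Type u} (G : SimpleGraph V) : ℕ :=
  sInf {n | ∃ W : Set V, IsVC G W ∧ W.ncard = n}

/-- A graph is chordal if every cycle on four or more vertices has a chord, i.e. an
edge of the graph between two vertices of the cycle that is not an edge of the cycle. -/
def IsChordalG {V : Type u} (G : SimpleGraph V) : Prop :=
  ∀ (v : V) (w : G.Walk v v), w.IsCycle → 4 ≤ w.length →
    ∃ x ∈ w.support, ∃ y ∈ w.support, G.Adj x y ∧ s(x, y) ∉ w.edges

/-- `H` is a minimal triangulation of `G`: a chordal supergraph of `G` such that no graph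
strictly between `G` and `H` is chordal. -/
def IsMinimalTriangulation {V : Type u} (G H : SimpleGraph V) : Prop :=
  G ≤ H ∧ IsChordalG H ∧ ∀ F : SimpleGraph V, G ≤ F → F < H → ¬ IsChordalG F

/-- `Ω` is a maximal clique of `H`. -/
def IsMaxClique {V : Type u} (H : SimpleGraph V) (Ω : Set V) : Prop :=
  H.IsClique Ω ∧ ∀ t : Set V, H.IsClique t → Ω ⊆ t → t = Ω

/-- `Ω` is a potential maximal clique of `G`: a maximal clique of some
minimal triangulation of `G`. -/
def IsPMC {V : Type u} (G : SimpleGraph V) (Ω : Set V) : Prop :=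
  ∃ H : SimpleGraph V, IsMinimalTriangulation G H ∧ IsMaxClique H Ω

/-- The class of graphs of modular width at most `k`, defined inductively:
(i) graphs with at most one vertex; (ii) disjoint unions of graphs in the class;
(iii) joins of graphs in the class; (iv) graphs whose vertex set can be partitioned
into `p ≤ k` modules, each inducing a graph in the class. -/
inductive MWLE (k : ℕ) : ∀ (V : Type), SimpleGraph V → Prop where
  | base (V : Type) (G : SimpleGraph V) (h : Subsingleton V) : MWLE k V G
  | disjUnion (V : Type) (G : SimpleGraph V) (ι : Type) (P : ι → Set V)
      (hpart : ∀ x : V, ∃! i, x ∈ P i)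
      (hrec : ∀ i, MWLE k (P i) (SimpleGraph.induce (P i) G))
      (hcross : ∀ i j, i ≠ j → ∀ x ∈ P i, ∀ y ∈ P j, ¬ G.Adj x y) :
      MWLE k V G
  | join (V : Type) (G : SimpleGraph V) (ι : Type) (P : ι → Set V)
      (hpart : ∀ x : V, ∃! i, x ∈ P i)
      (hrec : ∀ i, MWLE k (P i) (SimpleGraph.induce (P i) G))
      (hcross : ∀ i j, i ≠ j → ∀ x ∈ P i, ∀ y ∈ P j, G.Adj x y) :
      MWLE k V G
  | modules (V : Type) (G : SimpleGraph V) (p : ℕ) (hp : p ≤ k) (P : Fin p → Set V)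
      (hpart : ∀ x : V, ∃! i, x ∈ P i)
      (hrec : ∀ i, MWLE k (P i) (SimpleGraph.induce (P i) G))
      (hmod : ∀ i, ∀ x : V, x ∉ P i →
        (∀ y ∈ P i, G.Adj x y) ∨ (∀ y ∈ P i, ¬ G.Adj x y)) :
      MWLE k V G

/-- The modular width `mw(G)`: the least `k` such that `G` has modular width at most `k`. -/
noncomputable def mwNum {V : Type} (G : SimpleGraph V) : ℕ := sInf {k | MWLE k V G}

/-!
Let `P` be a partition of `V(G)` into modules and let `S` be a minimal `u,v`-separator. If `u`
and `v` lie in one module `M`, then `S = T ∪ N(M)` for a minimal separator `T` of `G[M]`;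
otherwise `S` is a union of modules forming a minimal separator of the quotient graph `G/P`.
Hence `s(G) ≤ ∑ s(G[Mᵢ]) + s(G/P)`, and induction along the modular decomposition gives
`s(G) ≤ A Bᵏ (2n - 1)` for `mw(G) ≤ k`, provided every graph on `p` vertices has at most `A Bᵖ`
minimal separators.

That bound holds for every `B > φ` (Fomin–Villanger): a minimal separator is `N(C)` for a full
component `C` with `2|C| + |N(C)| ≤ n`, and the connected sets `C` through a fixed vertex with
`|C| = a + 1` and `|N(C)| ≤ s` number at most `F(2a + s + 1)`, by branching on whether a
boundary vertex joins `C`.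
-/

section Reach

variable {V : Type*} {G : SimpleGraph V} {S A : Set V} {u v w x : V}

lemma avoidReach_refl (h : u ∉ S) : AvoidReach G S u u :=
  ⟨Walk.nil, by simpa using h⟩

lemma AvoidReach.symm (h : AvoidReach G S u v) : AvoidReach G S v u :=
  let ⟨p, hp⟩ := h
  ⟨p.reverse, by simpa using hp⟩

lemma AvoidReach.trans (h : AvoidReach G S u v) (h' : AvoidReach G S v w) :
    AvoidReach G S u w :=
  let ⟨p, hp⟩ := h
  let ⟨q, hq⟩ := h'
  ⟨p.append q, fun z hz => ((Walk.mem_support_append_iff p q).1 hz).elim (hp z) (hq z)⟩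

lemma AvoidReach.notMem_left (h : AvoidReach G S u v) : u ∉ S :=
  let ⟨p, hp⟩ := h
  hp u p.start_mem_support

lemma AvoidReach.notMem_right (h : AvoidReach G S u v) : v ∉ S :=
  h.symm.notMem_left

lemma avoidReach_of_adj (h : G.Adj u v) (hu : u ∉ S) (hv : v ∉ S) : AvoidReach G S u v :=
  ⟨h.toWalk, by simp [hu, hv]⟩

lemma avoidReach_of_mem_support {p : G.Walk u v} (hp : ∀ z ∈ p.support, z ∉ S)
    (hx : x ∈ p.support) : AvoidReach G S u x := by
  classical
  exact ⟨p.takeUntil x hx, fun z hz => hp z (p.support_takeUntil_subset_support hx hz)⟩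

lemma AvoidReach.exists_mem_setNbhd (h : AvoidReach G S u v) (hu : u ∈ A) (hv : v ∉ A) :
    ∃ w ∈ setNbhd G A, AvoidReach G S u w := by
  obtain ⟨p, hp⟩ := h
  induction p with
  | nil => exact absurd hu hv
  | @cons a c b hac p ih =>
    have hreach : AvoidReach G S a c := avoidReach_of_adj hac (hp a (by simp)) (hp c (by simp))
    by_cases hc : c ∈ A
    · obtain ⟨w, hw, hcw⟩ := ih hc hv fun z hz => hp z (by simp [hz])
      exact ⟨w, hw, hreach.trans hcw⟩
    · exact ⟨c, ⟨hc, a, hu, hac.symm⟩, hreach⟩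

lemma AvoidReach.map {W : Type*} {H : SimpleGraph W} {f : V → W} {J : Set W}
    (hf : ∀ ⦃a b⦄, G.Adj a b → f a = f b ∨ H.Adj (f a) (f b))
    (h : AvoidReach G (f ⁻¹' J) u v) : AvoidReach H J (f u) (f v) := by
  obtain ⟨p, hp⟩ := h
  induction p with
  | nil => exact avoidReach_refl (hp _ (by simp))
  | @cons a c b hac p ih =>
    have hc := ih fun z hz => hp z (by simp [hz])
    rcases hf hac with heq | hadj
    · exact heq ▸ hc
    · exact (avoidReach_of_adj hadj (hp a (by simp)) hc.notMem_left).trans hc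

def reachSet (G : SimpleGraph V) (S : Set V) (u : V) : Set V := {x | AvoidReach G S u x}

lemma disjoint_reachSet : Disjoint (reachSet G S u) S :=
  Set.disjoint_left.2 fun _ hx => hx.notMem_right

lemma setNbhd_reachSet_subset : setNbhd G (reachSet G S u) ⊆ S := by
  rintro x ⟨hx, a, ha, hxa⟩
  by_contra hxS
  exact hx (ha.trans (avoidReach_of_adj hxa.symm ha.notMem_right hxS))

lemma AvoidReach.compl_reachSet (h : AvoidReach G S u x) :
    AvoidReach G (reachSet G S u)ᶜ u x :=
  let ⟨p, hp⟩ := h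
  ⟨p, fun _ hz hz' => hz' (avoidReach_of_mem_support hp hz)⟩

end Reach

section MinSep

variable {V : Type*} {G : SimpleGraph V} {S : Set V} {u v : V}

lemma IsSep.not_adj (h : IsSep G S u v) : ¬ G.Adj u v :=
  fun huv => h.2.2 (avoidReach_of_adj huv h.1 h.2.1)

lemma IsMinSep.ne (h : IsMinSep G S u v) : u ≠ v := by
  rintro rfl
  exact h.1.2.2 (avoidReach_refl h.1.1)

lemma IsMinSep.symm (h : IsMinSep G S u v) : IsMinSep G S v u :=
  ⟨⟨h.1.2.1, h.1.1, fun h' => h.1.2.2 h'.symm⟩,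
    fun T hT hsep => h.2 T hT ⟨hsep.2.1, hsep.1, fun h' => hsep.2.2 h'.symm⟩⟩

/-- Every vertex `x ∈ S` is needed, so `u` reaches `v` in `G - (S \ {x})`; such a path can
only leave the component of `u` through `x`. -/
lemma IsMinSep.setNbhd_reachSet (h : IsMinSep G S u v) : setNbhd G (reachSet G S u) = S := by
  refine setNbhd_reachSet_subset.antisymm fun x hx => ?_
  have hreach : AvoidReach G (S \ {x}) u v := by
    by_contra hno
    exact h.2 _ (Set.sdiff_singleton_ssubset.2 hx)
      ⟨fun hu => h.1.1 hu.1, fun hv => h.1.2.1 hv.1, hno⟩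
  obtain ⟨w, hw, huw⟩ :=
    hreach.exists_mem_setNbhd (A := reachSet G S u) (avoidReach_refl h.1.1) h.1.2.2
  obtain rfl : w = x := by
    by_contra hwx
    exact huw.notMem_right ⟨setNbhd_reachSet_subset hw, hwx⟩
  exact hw

lemma IsMinSep.eq_empty_of_eq_bot (h : IsMinSep G S u v) (hG : G = ⊥) : S = ∅ := by
  subst hG
  rw [← h.setNbhd_reachSet]
  simp [setNbhd]

end MinSep

section Induce

variable {V : Type*} {G : SimpleGraph V} {W : Set V} {X : Set W} {a b : W}

lemma avoidReach_induce_iff :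
    AvoidReach (G.induce W) X a b ↔ AvoidReach G (Subtype.val '' X ∪ setNbhd G W) a b := by
  constructor
  · rintro ⟨p, hp⟩
    let f : G.induce W →g G := ⟨Subtype.val, id⟩
    refine ⟨p.map f, fun x hx => ?_⟩
    rw [Walk.support_map, List.mem_map] at hx
    obtain ⟨z, hz, rfl⟩ := hx
    rintro (⟨z', hz', hzz'⟩ | hN)
    · exact hp z hz (Subtype.val_injective hzz' ▸ hz')
    · exact hN.1 z.2
  · rintro ⟨p, hp⟩
    have hW : ∀ z ∈ p.support, z ∈ W := by
      intro z hz
      by_contra hzW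
      obtain ⟨w, hw, haw⟩ := (avoidReach_of_mem_support hp hz).exists_mem_setNbhd a.2 hzW
      exact haw.notMem_right (Or.inr hw)
    refine ⟨p.induce W hW, ?_⟩
    simp only [Walk.support_induce, List.mem_attachWith]
    exact fun z hz hzX => hp z hz (Or.inl ⟨z, hzX, rfl⟩)

lemma isSep_induce_iff :
    IsSep (G.induce W) X a b ↔ IsSep G (Subtype.val '' X ∪ setNbhd G W) a b := by
  have hmem : ∀ c : W, (c : V) ∈ Subtype.val '' X ∪ setNbhd G W ↔ c ∈ X := fun c => by
    simp [setNbhd, Subtype.val_injective.mem_set_image, c.2]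
  simp only [IsSep, hmem, avoidReach_induce_iff]

lemma IsMinSep.induce (h : IsMinSep G (Subtype.val '' X ∪ setNbhd G W) a b) :
    IsMinSep (G.induce W) X a b := by
  refine ⟨isSep_induce_iff.2 h.1, fun Y hYX hY => h.2 _ ⟨?_, ?_⟩ (isSep_induce_iff.1 hY)⟩
  · exact Set.union_subset_union_left _ (Set.image_mono hYX.1)
  · obtain ⟨x, hxX, hxY⟩ := Set.exists_of_ssubset hYX
    intro hsub
    rcases hsub (Or.inl ⟨x, hxX, rfl⟩) with ⟨y, hy, hyx⟩ | hN
    · exact hxY (Subtype.val_injective hyx ▸ hy)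
    · exact hN.1 x.2

end Induce

section Module

variable {V : Type*} {G : SimpleGraph V} {S W : Set V} {u v a b x y : V}

def IsModule (G : SimpleGraph V) (W : Set V) : Prop :=
  ∀ x : V, x ∉ W → (∀ y ∈ W, G.Adj x y) ∨ (∀ y ∈ W, ¬ G.Adj x y)

lemma isModule_singleton (G : SimpleGraph V) (a : V) : IsModule G {a} := fun x _ =>
  (em (G.Adj x a)).imp (fun h _ hy => hy ▸ h) (fun h _ hy => hy ▸ h)

lemma IsModule.adj_of_mem_setNbhd (hW : IsModule G W) (hx : x ∈ setNbhd G W) (hy : y ∈ W) :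
    G.Adj x y :=
  let ⟨hxW, _, ha, hxa⟩ := hx
  (hW x hxW).resolve_right (fun h => h _ ha hxa) y hy

/-- A path from outside `W` into `W` enters through `N(W)`, whose vertices see all of `W`. -/
lemma IsModule.avoidReach_of_avoidReach (hW : IsModule G W) (h : AvoidReach G S u a)
    (hu : u ∉ W) (ha : a ∈ W) (hb : b ∈ W) (hbS : b ∉ S) : AvoidReach G S u b := by
  obtain ⟨w, hw, haw⟩ := h.symm.exists_mem_setNbhd ha hu
  exact h.trans (haw.trans (avoidReach_of_adj (hW.adj_of_mem_setNbhd hw hb) haw.notMem_right hbS))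

lemma IsMinSep.subset_of_isModule (h : IsMinSep G S u v) (hW : IsModule G W)
    (huv : u ∉ W ∨ v ∉ W) (hSW : (S ∩ W).Nonempty) : W ⊆ S := by
  obtain ⟨x, hxS, hxW⟩ := hSW
  intro y hyW
  by_contra hyS
  have hmeet : ∀ {u' v'}, IsMinSep G S u' v' → ∃ c ∈ W, AvoidReach G S u' c := by
    intro u' v' h'
    obtain ⟨-, a, ha, hxa⟩ : x ∈ setNbhd G (reachSet G S u') := by
      rwa [h'.setNbhd_reachSet]
    by_cases haW : a ∈ W
    · exact ⟨a, haW, ha⟩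
    · have hay := hW.adj_of_mem_setNbhd ⟨haW, x, hxW, hxa.symm⟩ hyW
      exact ⟨y, hyW, ha.trans (avoidReach_of_adj hay ha.notMem_right hyS)⟩
  obtain ⟨cu, hcu, hucu⟩ := hmeet h
  obtain ⟨cv, hcv, hvcv⟩ := hmeet h.symm
  refine h.1.2.2 ?_
  rcases huv with hu | hv
  · exact (hW.avoidReach_of_avoidReach hucu hu hcu hcv hvcv.notMem_right).trans hvcv.symm
  · exact hucu.trans (hW.avoidReach_of_avoidReach hvcv hv hcv hcu hucu.notMem_right).symm

lemma IsMinSep.reachSet_subset_of_isModule (h : IsMinSep G S u v) (hW : IsModule G W)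
    (hu : u ∈ W) (hv : v ∈ W) : reachSet G S u ⊆ W := fun z hz => by
  by_contra hzW
  exact h.1.2.2 (hz.trans (hW.avoidReach_of_avoidReach hz.symm hzW hu hv h.1.2.1))

lemma IsMinSep.diff_eq_setNbhd_of_isModule (h : IsMinSep G S u v) (hW : IsModule G W)
    (hu : u ∈ W) (hv : v ∈ W) : S \ W = setNbhd G W := by
  ext x
  constructor
  · rintro ⟨hxS, hxW⟩
    obtain ⟨-, a, ha, hxa⟩ : x ∈ setNbhd G (reachSet G S u) := by
      rwa [h.setNbhd_reachSet]
    exact ⟨hxW, a, h.reachSet_subset_of_isModule hW hu hv ha, hxa⟩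
  · refine fun hx => ⟨?_, hx.1⟩
    by_contra hxS
    exact h.1.2.2 <| (avoidReach_of_adj (hW.adj_of_mem_setNbhd hx hu).symm h.1.1 hxS).trans
      (avoidReach_of_adj (hW.adj_of_mem_setNbhd hx hv) hxS h.1.2.1)

lemma IsMinSep.induce_of_isModule (h : IsMinSep G S u v) (hW : IsModule G W)
    (hu : u ∈ W) (hv : v ∈ W) :
    IsMinSep (G.induce W) (((↑) : W → V) ⁻¹' S) ⟨u, hu⟩ ⟨v, hv⟩ ∧
      S = Subtype.val '' (((↑) : W → V) ⁻¹' S) ∪ setNbhd G W := by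
  have hS : S = Subtype.val '' (((↑) : W → V) ⁻¹' S) ∪ setNbhd G W := by
    rw [Subtype.image_preimage_coe, ← h.diff_eq_setNbhd_of_isModule hW hu hv, Set.inter_comm,
      Set.inter_union_sdiff]
  exact ⟨IsMinSep.induce (hS ▸ h), hS⟩

end Module

section Quotient

variable {V ι : Type*} {G : SimpleGraph V} {P : ι → Set V} {S : Set V} {u v x y : V} {i j : ι}

structure IsModularPartition (G : SimpleGraph V) (P : ι → Set V) : Prop where
  existsUnique_mem : ∀ x, ∃! i, x ∈ P i
  isModule : ∀ i, IsModule G (P i)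

def quotientGraph (G : SimpleGraph V) (P : ι → Set V) : SimpleGraph ι where
  Adj i j := i ≠ j ∧ ∃ x ∈ P i, ∃ y ∈ P j, G.Adj x y
  symm := ⟨fun _ _ ⟨hne, x, hx, y, hy, h⟩ => ⟨hne.symm, y, hy, x, hx, h.symm⟩⟩
  loopless := ⟨fun _ h => h.1 rfl⟩

def quotientMinSeps (G : SimpleGraph V) (P : ι → Set V) : Set (Set ι) :=
  {J | ∃ a b, IsMinSep (quotientGraph G P) J a b ∧ (P a).Nonempty ∧ (P b).Nonempty}

namespace IsModularPartition

variable (hP : IsModularPartition G P)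
include hP

noncomputable def index (x : V) : ι := (hP.existsUnique_mem x).choose

lemma index_eq_iff : hP.index x = i ↔ x ∈ P i :=
  ⟨fun h => h ▸ (hP.existsUnique_mem x).choose_spec.1,
    fun h => ((hP.existsUnique_mem x).choose_spec.2 i h).symm⟩

lemma mem_index (x : V) : x ∈ P (hP.index x) := hP.index_eq_iff.1 rfl

lemma notMem_of_ne (hx : x ∈ P i) (hij : i ≠ j) : x ∉ P j := fun hxj =>
  hij ((hP.index_eq_iff.2 hx).symm.trans (hP.index_eq_iff.2 hxj))

lemma adj_of_quotientGraph_adj (h : (quotientGraph G P).Adj i j) (hx : x ∈ P i)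
    (hy : y ∈ P j) : G.Adj x y := by
  obtain ⟨hij, x₀, hx₀, y₀, hy₀, h₀⟩ := h
  have hy₀x : G.Adj y₀ x := (hP.isModule i).adj_of_mem_setNbhd
    ⟨hP.notMem_of_ne hy₀ hij.symm, x₀, hx₀, h₀.symm⟩ hx
  exact (hP.isModule j).adj_of_mem_setNbhd ⟨hP.notMem_of_ne hx hij, y₀, hy₀, hy₀x.symm⟩ hy

lemma avoidReach_of_quotientGraph {J : Set ι} (h : AvoidReach (quotientGraph G P) J i j)
    (hij : i ≠ j) (hx : x ∈ P i) (hy : y ∈ P j) : AvoidReach G (hP.index ⁻¹' J) x y := by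
  have hnotMem : ∀ {z k}, z ∈ P k → k ∉ J → z ∉ hP.index ⁻¹' J := fun hz hk => by
    rwa [Set.mem_preimage, hP.index_eq_iff.2 hz]
  obtain ⟨p, hp⟩ := h
  induction p generalizing x with
  | nil => exact absurd rfl hij
  | @cons i e j hie p ih =>
    have hxJ := hnotMem hx (hp i (by simp))
    by_cases hej : e = j
    · subst hej
      exact avoidReach_of_adj (hP.adj_of_quotientGraph_adj hie hx hy) hxJ
        (hnotMem hy (hp e (by simp)))
    · obtain ⟨-, -, -, z, hz, -⟩ := id hie
      exact (avoidReach_of_adj (hP.adj_of_quotientGraph_adj hie hx hz) hxJ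
        (hnotMem hz (hp e (by simp)))).trans (ih hej hz hy fun k hk => hp k (by simp [hk]))

lemma isMinSep_quotientGraph {J : Set ι} (hJ : ∀ j ∈ J, (P j).Nonempty)
    (h : IsMinSep G (hP.index ⁻¹' J) u v) (huv : hP.index u ≠ hP.index v) :
    IsMinSep (quotientGraph G P) J (hP.index u) (hP.index v) := by
  have hsep : ∀ T, IsSep G (hP.index ⁻¹' T) u v ↔
      IsSep (quotientGraph G P) T (hP.index u) (hP.index v) := fun T => by
    refine and_congr Iff.rfl (and_congr Iff.rfl (not_congr ⟨AvoidReach.map ?_, fun h' =>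
      hP.avoidReach_of_quotientGraph h' huv (hP.mem_index u) (hP.mem_index v)⟩))
    intro a b hab
    refine or_iff_not_imp_left.2 fun hne => ⟨hne, a, hP.mem_index a, b, hP.mem_index b, hab⟩
  refine ⟨(hsep J).1 h.1, fun T hTJ hT => h.2 _ ⟨Set.preimage_mono hTJ.1, fun hsub => ?_⟩
    ((hsep T).2 hT)⟩
  obtain ⟨j, hjJ, hjT⟩ := Set.exists_of_ssubset hTJ
  obtain ⟨z, hz⟩ := hJ j hjJ
  have hzj := hP.index_eq_iff.2 hz
  exact hjT (hzj ▸ hsub (show hP.index z ∈ J from hzj ▸ hjJ))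

theorem minimalSeparator_cases (hS : IsMinimalSeparator G S) :
    (∃ i, ∃ T : Set (P i), IsMinimalSeparator (G.induce (P i)) T ∧
        S = Subtype.val '' T ∪ setNbhd G (P i)) ∨
      ∃ J ∈ quotientMinSeps G P, S = hP.index ⁻¹' J := by
  obtain ⟨u, v, h⟩ : ∃ u v, IsMinSep G S u v := hS
  by_cases huv : hP.index u = hP.index v
  · have hv : v ∈ P (hP.index u) := huv ▸ hP.mem_index v
    obtain ⟨hmin, hS⟩ := h.induce_of_isModule (hP.isModule _) (hP.mem_index u) hv
    exact Or.inl ⟨_, _, ⟨_, _, hmin⟩, hS⟩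
  · set J := {j | (P j).Nonempty ∧ P j ⊆ S}
    have hSJ : S = hP.index ⁻¹' J := by
      ext z
      refine ⟨fun hz => ⟨⟨z, hP.mem_index z⟩, h.subset_of_isModule (hP.isModule _) ?_
        ⟨z, hz, hP.mem_index z⟩⟩, fun hz => hz.2 (hP.mem_index z)⟩
      by_contra! huvz
      exact huv ((hP.index_eq_iff.2 huvz.1).trans (hP.index_eq_iff.2 huvz.2).symm)
    refine Or.inr ⟨J, ⟨_, _, hP.isMinSep_quotientGraph (fun j hj => hj.1) (hSJ ▸ h) huv,
      ⟨u, hP.mem_index u⟩, ⟨v, hP.mem_index v⟩⟩, hSJ⟩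

end IsModularPartition

end Quotient

section Count

variable {V ι : Type*} {G : SimpleGraph V} {P : ι → Set V}

lemma quotientMinSeps_subset_singleton_empty
    (hcross : ∀ i j, i ≠ j → ∀ x ∈ P i, ∀ y ∈ P j, ¬ G.Adj x y) :
    quotientMinSeps G P ⊆ {∅} := by
  rintro J ⟨a, b, h, -, -⟩
  refine h.eq_empty_of_eq_bot ?_
  ext i j
  exact ⟨fun ⟨hij, x, hx, y, hy, hxy⟩ => hcross i j hij x hx y hy hxy, False.elim⟩

lemma quotientMinSeps_eq_empty (hcross : ∀ i j, i ≠ j → ∀ x ∈ P i, ∀ y ∈ P j, G.Adj x y) :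
    quotientMinSeps G P = ∅ := by
  refine Set.eq_empty_of_forall_notMem ?_
  rintro J ⟨a, b, h, ⟨x, hx⟩, ⟨y, hy⟩⟩
  exact h.1.not_adj ⟨h.ne, x, hx, y, hy, hcross a b h.ne x hx y hy⟩

namespace IsModularPartition

variable (hP : IsModularPartition G P)
include hP

lemma finite_nonempty [Finite V] : {i | (P i).Nonempty}.Finite :=
  (Set.finite_range hP.index).subset fun _ ⟨x, hx⟩ => ⟨x, hP.index_eq_iff.2 hx⟩

lemma sum_ncard [Finite V] : ∑ i ∈ hP.finite_nonempty.toFinset, (P i).ncard = Nat.card V := by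
  classical
  have := Fintype.ofFinite V
  rw [Nat.card_eq_fintype_card, ← Finset.card_univ,
    Finset.card_eq_sum_card_fiberwise (f := hP.index) (t := hP.finite_nonempty.toFinset)
      fun x _ => by
      simpa only [Finset.mem_coe, Set.Finite.mem_toFinset] using ⟨x, hP.mem_index x⟩]
  refine Finset.sum_congr rfl fun i _ => ?_
  rw [Set.ncard_eq_toFinset_card']
  congr 1
  ext x
  simp [hP.index_eq_iff]

lemma ncard_minimalSeparators_le [Finite V] (hQ : (quotientMinSeps G P).Finite) :
    {S | IsMinimalSeparator G S}.ncard ≤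
      ∑ i ∈ hP.finite_nonempty.toFinset,
        {T : Set (P i) | IsMinimalSeparator (G.induce (P i)) T}.ncard +
      (quotientMinSeps G P).ncard := by
  have hcover : {S | IsMinimalSeparator G S} ⊆
      (⋃ i ∈ hP.finite_nonempty.toFinset, (fun T => Subtype.val '' T ∪ setNbhd G (P i)) ''
        {T : Set (P i) | IsMinimalSeparator (G.induce (P i)) T}) ∪
      (hP.index ⁻¹' ·) '' quotientMinSeps G P := by
    intro S hS
    rcases hP.minimalSeparator_cases hS with ⟨i, T, hT, rfl⟩ | ⟨J, hJ, rfl⟩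
    · obtain ⟨⟨u, hu⟩, -⟩ := id hT
      exact Or.inl (Set.mem_biUnion (by simpa using ⟨u, hu⟩) ⟨T, hT, rfl⟩)
    · exact Or.inr ⟨J, hJ, rfl⟩
  calc _ ≤ _ := Set.ncard_le_ncard hcover
    _ ≤ _ := Set.ncard_union_le _ _
    _ ≤ _ := add_le_add
      ((Finset.set_ncard_biUnion_le _ _).trans
        (Finset.sum_le_sum fun i _ => Set.ncard_image_le (Set.toFinite _)))
      (Set.ncard_image_le hQ)

/-- The recurrence `s(G) ≤ Σ s(G[Pᵢ]) + s(G/P)` preserves a bound of the form `A (2n - 1)`: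
each module costs `-A`, and a quotient separator needs two nonempty modules. -/
lemma ncard_minimalSeparators_le_of_parts [Finite V] [Nonempty V] {A : ℝ} (hA : 0 ≤ A)
    (hQfin : (quotientMinSeps G P).Finite) (hQ : ((quotientMinSeps G P).ncard : ℝ) ≤ A)
    (hparts : ∀ i, (P i).Nonempty →
      ({T : Set (P i) | IsMinimalSeparator (G.induce (P i)) T}.ncard : ℝ) ≤
        A * (2 * (P i).ncard - 1)) :
    ({S | IsMinimalSeparator G S}.ncard : ℝ) ≤ A * (2 * Nat.card V - 1) := by
  classical
  set I := hP.finite_nonempty.toFinset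
  have hmemI : ∀ {i}, i ∈ I ↔ (P i).Nonempty := by simp [I]
  have hI : (1 : ℝ) ≤ I.card := by
    obtain ⟨x⟩ := ‹Nonempty V›
    exact_mod_cast Finset.card_pos.2 ⟨_, hmemI.2 ⟨x, hP.mem_index x⟩⟩
  have hQI : ((quotientMinSeps G P).ncard : ℝ) ≤ A * (I.card - 1) := by
    rcases (quotientMinSeps G P).eq_empty_or_nonempty with hQe | ⟨J, a, b, hab, ha, hb⟩
    · rw [hQe, Set.ncard_empty, Nat.cast_zero]
      nlinarith
    · have h2 : 2 ≤ I.card := (Finset.card_pair hab.ne).symm.le.trans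
        (Finset.card_le_card (by simp [Finset.insert_subset_iff, hmemI, ha, hb]))
      have h2' : (2 : ℝ) ≤ I.card := by exact_mod_cast h2
      nlinarith
  have hsum : ∑ i ∈ I, (2 * ((P i).ncard : ℝ) - 1) = 2 * Nat.card V - I.card := by
    rw [Finset.sum_sub_distrib, ← Finset.mul_sum, ← Nat.cast_sum, hP.sum_ncard]
    simp
  calc ({S | IsMinimalSeparator G S}.ncard : ℝ)
      ≤ ∑ i ∈ I, ({T : Set (P i) | IsMinimalSeparator (G.induce (P i)) T}.ncard : ℝ) +
          (quotientMinSeps G P).ncard := by exact_mod_cast hP.ncard_minimalSeparators_le hQfin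
    _ ≤ ∑ i ∈ I, A * (2 * ((P i).ncard : ℝ) - 1) + A * (I.card - 1) := by
      gcongr with i hi
      exact hparts i (hmemI.1 hi)
    _ = A * (2 * Nat.card V - 1) := by
      rw [← Finset.mul_sum, hsum]
      ring

end IsModularPartition

lemma isModularPartition_of_forall_not_adj (hpart : ∀ x, ∃! i, x ∈ P i)
    (hcross : ∀ i j, i ≠ j → ∀ x ∈ P i, ∀ y ∈ P j, ¬ G.Adj x y) : IsModularPartition G P where
  existsUnique_mem := hpart
  isModule i x hx := by
    obtain ⟨j, hj, -⟩ := hpart x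
    exact Or.inr fun y hy => hcross j i (by rintro rfl; exact hx hj) x hj y hy

lemma isModularPartition_of_forall_adj (hpart : ∀ x, ∃! i, x ∈ P i)
    (hcross : ∀ i j, i ≠ j → ∀ x ∈ P i, ∀ y ∈ P j, G.Adj x y) : IsModularPartition G P where
  existsUnique_mem := hpart
  isModule i x hx := by
    obtain ⟨j, hj, -⟩ := hpart x
    exact Or.inl fun y hy => hcross j i (by rintro rfl; exact hx hj) x hj y hy

end Count

section ConnectedSets

open Nat

variable {ι : Type*} {H : SimpleGraph ι} {C R F S : Set ι} {a s : ℕ} {q : ι}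

def IsPreconnectedSet (H : SimpleGraph ι) (C : Set ι) : Prop :=
  ∀ x ∈ C, ∀ y ∈ C, AvoidReach H Cᶜ x y

def connExtensions (H : SimpleGraph ι) (R F : Set ι) (a s : ℕ) : Set (Set ι) :=
  {C | R ⊆ C ∧ Disjoint C F ∧ IsPreconnectedSet H C ∧ C.ncard = R.ncard + a ∧
    (setNbhd H C \ F).ncard ≤ s}

lemma connExtensions_zero_subset [Finite ι] : connExtensions H R F 0 s ⊆ {R} :=
  fun _ ⟨hRC, _, _, hcard, _⟩ => (Set.eq_of_subset_of_ncard_le hRC hcard.le).symm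

lemma connExtensions_succ_eq_empty [Finite ι] (hR : R.Nonempty) (hRF : setNbhd H R ⊆ F) :
    connExtensions H R F (a + 1) s = ∅ := by
  refine Set.eq_empty_of_forall_notMem fun C ⟨hRC, hCF, hC, hcard, _⟩ => ?_
  obtain ⟨y, hyC, hyR⟩ : ∃ y ∈ C, y ∉ R := by
    by_contra! hCR
    have := Set.ncard_le_ncard hCR (Set.toFinite R)
    omega
  obtain ⟨r, hr⟩ := hR
  obtain ⟨q, hq, hrq⟩ := (hC r (hRC hr) y hyC).exists_mem_setNbhd hr hyR
  exact Set.disjoint_left.1 hCF (not_not.1 hrq.notMem_right) (hRF hq)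

lemma insert_mem_connExtensions [Finite ι] (hC : C ∈ connExtensions H R F (a + 1) s)
    (hqC : q ∈ C) (hqR : q ∉ R) : C ∈ connExtensions H (insert q R) F a s := by
  obtain ⟨hRC, hCF, hC, hcard, hN⟩ := hC
  refine ⟨Set.insert_subset hqC hRC, hCF, hC, ?_, hN⟩
  rw [Set.ncard_insert_of_notMem hqR]
  omega

lemma mem_connExtensions_insert [Finite ι] (hC : C ∈ connExtensions H R F a s)
    (hqN : q ∈ setNbhd H R) (hqF : q ∉ F) (hqC : q ∉ C) :
    0 < s ∧ C ∈ connExtensions H R (insert q F) a (s - 1) := by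
  obtain ⟨hRC, hCF, hC, hcard, hN⟩ := hC
  obtain ⟨-, p, hpR, hqp⟩ := hqN
  have hq : q ∈ setNbhd H C \ F := ⟨⟨hqC, p, hRC hpR, hqp⟩, hqF⟩
  have hpos := (Set.ncard_pos (Set.toFinite _)).2 ⟨q, hq⟩
  refine ⟨by omega, hRC, Set.disjoint_insert_right.2 ⟨hqC, hCF⟩, hC, hcard, ?_⟩
  rw [Set.insert_eq, Set.union_comm, ← Set.sdiff_sdiff, Set.ncard_sdiff_singleton_of_mem hq]
  omega

/-- Branch on a neighbour `q ∉ F` of `R`: either `q ∈ C`, and `a` drops by one, or `q ∈ N(C)`,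
and `s` drops by one. So `2a + s` drops by two or by one, which gives Fibonacci numbers. -/
theorem ncard_connExtensions_le [Finite ι] (H : SimpleGraph ι) :
    ∀ (a s : ℕ) {R : Set ι} (F : Set ι), R.Nonempty →
      (connExtensions H R F a s).ncard ≤ fib (2 * a + s + 1)
  | 0, s, R, F, _ =>
    (Set.ncard_le_ncard connExtensions_zero_subset).trans
      (by rw [Set.ncard_singleton]; exact fib_pos.2 (by omega))
  | a + 1, s, R, F, hR => by
    by_cases hRF : setNbhd H R ⊆ F
    · simp [connExtensions_succ_eq_empty hR hRF]
    obtain ⟨q, hqN, hqF⟩ := Set.not_subset.1 hRF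
    have hleft := ncard_connExtensions_le H a s F (Set.insert_nonempty q R)
    cases s with
    | zero =>
      have hsub : connExtensions H R F (a + 1) 0 ⊆ connExtensions H (insert q R) F a 0 :=
        fun C hC => by
          by_cases hqC : q ∈ C
          · exact insert_mem_connExtensions hC hqC hqN.1
          · exact absurd (mem_connExtensions_insert hC hqN hqF hqC).1 (lt_irrefl 0)
      exact (Set.ncard_le_ncard hsub).trans (hleft.trans (fib_mono (by omega)))
    | succ s =>
      have hright := ncard_connExtensions_le H (a + 1) s (insert q F) hR
      have hsub : connExtensions H R F (a + 1) (s + 1) ⊆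
          connExtensions H (insert q R) F a (s + 1) ∪ connExtensions H R (insert q F) (a + 1) s :=
        fun C hC => by
          by_cases hqC : q ∈ C
          · exact Or.inl (insert_mem_connExtensions hC hqC hqN.1)
          · exact Or.inr (mem_connExtensions_insert hC hqN hqF hqC).2
      calc _ ≤ _ := Set.ncard_le_ncard hsub
        _ ≤ _ := Set.ncard_union_le _ _
        _ ≤ fib (2 * a + (s + 1) + 1) + fib (2 * (a + 1) + s + 1) := _root_.add_le_add hleft hright
        _ = fib (2 * (a + 1) + (s + 1) + 1) := by
          rw [show 2 * (a + 1) + (s + 1) + 1 = 2 * a + (s + 1) + 1 + 2 by ring, fib_add_two,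
            show 2 * a + (s + 1) + 1 + 1 = 2 * (a + 1) + s + 1 by ring]

lemma isPreconnectedSet_reachSet {u : ι} : IsPreconnectedSet H (reachSet H S u) :=
  fun _ hx _ hy => hx.compl_reachSet.symm.trans hy.compl_reachSet

/-- A minimal separator is the neighbourhood of its smaller full component. -/
lemma IsMinSep.exists_eq_setNbhd [Finite ι] {u v : ι} (h : IsMinSep H S u v) :
    ∃ C, C.Nonempty ∧ IsPreconnectedSet H C ∧
      2 * C.ncard + (setNbhd H C).ncard ≤ Nat.card ι ∧ setNbhd H C = S := by
  have hcard : (reachSet H S u).ncard + (reachSet H S v).ncard + S.ncard ≤ Nat.card ι := by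
    have hdisj : Disjoint (reachSet H S u) (reachSet H S v) :=
      Set.disjoint_left.2 fun _ hu hv => h.1.2.2 (hu.trans hv.symm)
    rw [← Set.ncard_union_eq hdisj, ← Set.ncard_union_eq
      (Set.disjoint_union_left.2 ⟨disjoint_reachSet, disjoint_reachSet⟩)]
    exact Set.ncard_le_card _
  rcases le_total (reachSet H S u).ncard (reachSet H S v).ncard with huv | hvu
  · refine ⟨_, ⟨u, avoidReach_refl h.1.1⟩, isPreconnectedSet_reachSet, ?_, h.setNbhd_reachSet⟩
    rw [h.setNbhd_reachSet]
    omega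
  · refine ⟨_, ⟨v, avoidReach_refl h.1.2.1⟩, isPreconnectedSet_reachSet, ?_,
      h.symm.setNbhd_reachSet⟩
    rw [h.symm.setNbhd_reachSet]
    omega

theorem ncard_minimalSeparators_le_fib [Finite ι] (H : SimpleGraph ι) :
    {S | IsMinimalSeparator H S}.ncard ≤ Nat.card ι ^ 3 * fib (Nat.card ι) := by
  classical
  have := Fintype.ofFinite ι
  set n := Nat.card ι
  let K : Finset (ι × ℕ × ℕ) := (Finset.univ ×ˢ Finset.range n ×ˢ Finset.range n).filter
    fun k => 2 * k.2.1 + k.2.2 + 1 ≤ n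
  have hcover : {S | IsMinimalSeparator H S} ⊆
      ⋃ k ∈ K, setNbhd H '' connExtensions H {k.1} ∅ k.2.1 k.2.2 := by
    rintro S ⟨u, v, h⟩
    obtain ⟨C, ⟨r, hr⟩, hC, hcard, rfl⟩ := h.exists_eq_setNbhd
    have hC1 : 1 ≤ C.ncard := (Set.ncard_pos (Set.toFinite C)).2 ⟨r, hr⟩
    refine Set.mem_biUnion (x := (r, C.ncard - 1, (setNbhd H C).ncard)) ?_
      ⟨C, ⟨by simpa using hr, by simp, hC, by simp; omega, by simp⟩, rfl⟩
    simp only [K, Finset.mem_coe, Finset.mem_filter, Finset.mem_product, Finset.mem_univ,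
      Finset.mem_range, true_and]
    omega
  calc _ ≤ _ := Set.ncard_le_ncard hcover
    _ ≤ _ := Finset.set_ncard_biUnion_le _ _
    _ ≤ ∑ _ ∈ K, fib n := Finset.sum_le_sum fun k hk => (Set.ncard_image_le (Set.toFinite _)).trans
      ((ncard_connExtensions_le H _ _ _ (Set.singleton_nonempty _)).trans
        (fib_mono (Finset.mem_filter.1 hk).2))
    _ ≤ n ^ 3 * fib n := by
      rw [Finset.sum_const, smul_eq_mul]
      refine Nat.mul_le_mul_right _ (Finset.card_filter_le _ _ |>.trans_eq ?_)
      simp [n, Nat.card_eq_fintype_card]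
      ring

end ConnectedSets

section Asymptotics

open Real
open scoped goldenRatio

lemma fib_le_goldenRatio_pow (n : ℕ) : (Nat.fib n : ℝ) ≤ φ ^ n := by
  have h := fib_succ_sub_goldenConj_mul_fib n
  have hψ : ψ * Nat.fib n ≤ 0 :=
    mul_nonpos_of_nonpos_of_nonneg goldenConj_neg.le (Nat.cast_nonneg _)
  have hmono : (Nat.fib n : ℝ) ≤ Nat.fib (n + 1) := by exact_mod_cast Nat.fib_le_fib_succ
  linarith

theorem exists_ncard_minimalSeparators_le {B : ℝ} (hB : φ < B) :
    ∃ A : ℝ, 1 ≤ A ∧ ∀ (ι : Type*) [Finite ι] (H : SimpleGraph ι),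
      ({S | IsMinimalSeparator H S}.ncard : ℝ) ≤ A * B ^ Nat.card ι := by
  have hB0 : 0 < B := goldenRatio_pos.trans hB
  obtain ⟨M, hM⟩ := (tendsto_pow_const_mul_const_pow_of_lt_one 3 (div_nonneg goldenRatio_pos.le
    hB0.le) ((div_lt_one hB0).2 hB)).bddAbove_range
  refine ⟨max M 1, le_max_right _ _, fun ι _ H => ?_⟩
  set n := Nat.card ι
  calc ({S | IsMinimalSeparator H S}.ncard : ℝ)
      ≤ (n : ℝ) ^ 3 * φ ^ n := by
        have := ncard_minimalSeparators_le_fib H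
        calc _ ≤ ((n ^ 3 * Nat.fib n : ℕ) : ℝ) := by exact_mod_cast this
          _ ≤ _ := by push_cast; gcongr; exact fib_le_goldenRatio_pow n
    _ = (n : ℝ) ^ 3 * (φ / B) ^ n * B ^ n := by
        rw [mul_assoc, ← mul_pow, div_mul_cancel₀ _ hB0.ne']
    _ ≤ max M 1 * B ^ n := by
        gcongr
        exact (hM ⟨n, rfl⟩).trans (le_max_left _ _)

end Asymptotics

section ModularWidth

lemma mwle_card {V : Type} [Fintype V] (G : SimpleGraph V) : MWLE (Fintype.card V) V G := by
  let e := Fintype.equivFin V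
  refine .modules V G _ le_rfl (fun i => {e.symm i}) (fun x => ⟨e x, by simp, fun j hj => ?_⟩)
    (fun i => .base _ _ inferInstance) (fun i => isModule_singleton G (e.symm i))
  simp [Set.mem_singleton_iff.1 hj]

theorem ncard_minimalSeparators_le_of_mwle {A B : ℝ} (hA : 1 ≤ A) (hB : 1 ≤ B)
    (hbound : ∀ (ι : Type) [Finite ι] (H : SimpleGraph ι),
      ({S | IsMinimalSeparator H S}.ncard : ℝ) ≤ A * B ^ Nat.card ι)
    {k : ℕ} {V : Type} {G : SimpleGraph V} (h : MWLE k V G) [hfin : Finite V]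
    [hne : Nonempty V] :
    ({S | IsMinimalSeparator G S}.ncard : ℝ) ≤ A * B ^ k * (2 * Nat.card V - 1) := by
  have hABk : 1 ≤ A * B ^ k := one_le_mul_of_one_le_of_one_le hA (one_le_pow₀ hB)
  revert hfin hne
  induction h with
  | base V G hV =>
    intro _ _
    have hempty : {S | IsMinimalSeparator G S} = ∅ :=
      Set.eq_empty_of_forall_notMem fun S ⟨u, v, h⟩ => h.ne (Subsingleton.elim u v)
    have hV1 : (1 : ℝ) ≤ Nat.card V := by exact_mod_cast Nat.card_pos
    rw [hempty, Set.ncard_empty, Nat.cast_zero]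
    nlinarith
  | disjUnion V G ι P hpart _ hcross ih =>
    intro _ _
    have hQ := quotientMinSeps_subset_singleton_empty hcross
    refine (isModularPartition_of_forall_not_adj hpart hcross).ncard_minimalSeparators_le_of_parts
      (by positivity) ((Set.finite_singleton _).subset hQ) ?_ fun i hi => ?_
    · have := Set.ncard_le_ncard hQ
      rw [Set.ncard_singleton] at this
      exact (Nat.cast_le_one.2 this).trans hABk
    · have := hi.to_subtype
      exact ih i
  | join V G ι P hpart _ hcross ih =>
    intro _ _
    have hQ := quotientMinSeps_eq_empty hcross
    refine (isModularPartition_of_forall_adj hpart hcross).ncard_minimalSeparators_le_of_parts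
      (by positivity) (hQ ▸ Set.finite_empty) (by simp [hQ]; positivity) fun i hi => ?_
    have := hi.to_subtype
    exact ih i
  | modules V G p hp P hpart _ hmod ih =>
    intro _ _
    have hQ : quotientMinSeps G P ⊆ {J | IsMinimalSeparator (quotientGraph G P) J} :=
      fun J ⟨a, b, h, _⟩ => ⟨a, b, h⟩
    refine IsModularPartition.ncard_minimalSeparators_le_of_parts ⟨hpart, hmod⟩ (by positivity)
      (Set.toFinite _) ?_ fun i hi => ?_
    · calc _ ≤ ({J | IsMinimalSeparator (quotientGraph G P) J}.ncard : ℝ) := by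
            exact_mod_cast Set.ncard_le_ncard hQ
        _ ≤ A * B ^ p := by simpa using hbound (Fin p) (quotientGraph G P)
        _ ≤ A * B ^ k := by gcongr
    · have := hi.to_subtype
      exact ih i

end ModularWidth

lemma goldenRatio_lt_1_6181 : Real.goldenRatio < 1.6181 := by
  rw [Real.goldenRatio, div_lt_iff₀ two_pos, ← lt_sub_iff_add_lt', Real.sqrt_lt' (by norm_num)]
  norm_num

theorem statement_15 : ∃ c : ℝ, 0 < c ∧
    ∀ (V : Type) [Fintype V] (G : SimpleGraph V), 1 ≤ Fintype.card V →
      ({S : Set V | IsMinimalSeparator G S}.ncard : ℝ) ≤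
        c * (Fintype.card V : ℝ) * 1.6181 ^ mwNum G := by
  obtain ⟨A, hA, hsep⟩ := exists_ncard_minimalSeparators_le goldenRatio_lt_1_6181
  refine ⟨2 * A, by positivity, fun V _ G hV => ?_⟩
  have : Nonempty V := Fintype.card_pos_iff.1 hV
  have hmw : MWLE (mwNum G) V G := Nat.sInf_mem (s := {k | MWLE k V G}) ⟨_, mwle_card G⟩
  have hbound := ncard_minimalSeparators_le_of_mwle hA (by norm_num) hsep hmw
  rw [Nat.card_eq_fintype_card] at hbound
  calc _ ≤ _ := hbound
    _ ≤ A * 1.6181 ^ mwNum G * (2 * Fintype.card V) := by gcongr; linarith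
    _ = _ := by ring
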